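/- The harmonic measure depends continuously on its starting point: for every bounded continuous function f : E → ℝ, the map [0,∞)² → ℝ, x ↦ ∫ f dQ_x, is continuous (including at boundary points x ∈ E, where Q_x = δ_x). -/

import Mathlib

/-!
Squaring `z ↦ z²` maps the open quadrant conformally onto the upper half-plane and sends
`x = (u, v)` to `(u² - v²) + 2uv·i`. Harmonic measure of the half-plane seen from that point is
the Cauchy law with location `u² - v²` and scale `2uv`, so `Q_x` is its image under the inverse
`s ↦ (√s, √(-s))` of squaring on the boundary `E`. This also holds on `E` itself, where the scale
vanishes and the Cauchy law degenerates to a Dirac mass. Since the Cauchy law is the image of the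
uniform law on `(-π/2, π/2)` under `θ ↦ u² - v² + 2uv tan θ`, dominated convergence makes
`x ↦ ∫ f dQ_x` continuous.
-/

open MeasureTheory Real Set

noncomputable def Qdens (u v t : ℝ) : ℝ :=
  (4 / π) * (u * v * t) / (4 * u ^ 2 * v ^ 2 + (t ^ 2 + v ^ 2 - u ^ 2) ^ 2)

/-- The harmonic measure `Q_x` of planar Brownian motion started at `x ∈ [0,∞)²` and
stopped upon leaving the open quadrant `(0,∞)²`; for `x ∈ E = [0,∞)² \ (0,∞)²` it is
the Dirac measure `δ_x`. -/
noncomputable def Qmeas (x : ℝ × ℝ) : Measure (ℝ × ℝ) :=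
  if 0 < x.1 ∧ 0 < x.2 then
    Measure.map (fun t => (t, (0 : ℝ)))
      ((volume.restrict (Ioi (0 : ℝ))).withDensity fun t => ENNReal.ofReal (Qdens x.1 x.2 t))
    + Measure.map (fun t => ((0 : ℝ), t))
      ((volume.restrict (Ioi (0 : ℝ))).withDensity fun t => ENNReal.ofReal (Qdens x.2 x.1 t))
  else Measure.dirac x

/-- The boundary set `E = [0,∞)² \ (0,∞)²` of the quadrant. -/
def Eset : Set (ℝ × ℝ) := {p | (0 ≤ p.1 ∧ 0 ≤ p.2) ∧ (p.1 = 0 ∨ p.2 = 0)}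

open ProbabilityTheory
open scoped NNReal ENNReal

@[fun_prop]
theorem Real.measurable_tan : Measurable tan := by
  rw [show tan = sin / cos from funext tan_eq_sin_div_cos]
  exact measurable_sin.div measurable_cos

theorem volume_Ioo_neg_pi_div_two_pi_div_two :
    volume (Ioo (-(π / 2)) (π / 2)) = ENNReal.ofReal π := by
  rw [volume_Ioo]
  ring_nf

instance : IsProbabilityMeasure (volume[|Ioo (-(π / 2)) (π / 2)]) :=
  cond_isProbabilityMeasure_of_finite (by simp [pi_pos]) (by simp)

theorem cauchyMeasure_eq_map_tan (x₀ : ℝ) (γ : ℝ≥0) :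
    cauchyMeasure x₀ γ = (volume[|Ioo (-(π / 2)) (π / 2)]).map fun θ => x₀ + γ * tan θ := by
  rcases eq_or_ne γ 0 with rfl | hγ
  · simp [Measure.map_const]
  have hγ' : (γ : ℝ) ≠ 0 := by exact_mod_cast hγ
  refine Measure.ext_of_lintegral _ fun g hg => ?_
  have hderiv (s : ℝ) :
      HasDerivAt (fun s => arctan ((s - x₀) / γ)) (π * cauchyPDFReal x₀ γ s) s := by
    refine (((hasDerivAt_id s).sub_const x₀).div_const (γ : ℝ)).arctan.congr_deriv ?_
    rw [cauchyPDFReal_def', id]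
    push_cast
    field_simp
  have hinj : InjOn (fun s => arctan ((s - x₀) / γ)) univ := fun a _ b _ h => by
    have := arctan_injective h
    field_simp at this
    linarith
  have himage : (fun s => arctan ((s - x₀) / γ)) '' univ = Ioo (-(π / 2)) (π / 2) := by
    rw [image_univ, ← range_arctan]
    exact Function.Surjective.range_comp (fun y => ⟨x₀ + γ * y, by field_simp; ring⟩) arctan
  have hcov := lintegral_image_eq_lintegral_abs_deriv_mul MeasurableSet.univ
    (fun s _ => (hderiv s).hasDerivWithinAt) hinj fun θ => g (x₀ + γ * tan θ)
  rw [himage, Measure.restrict_univ] at hcov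
  rw [lintegral_map hg (by fun_prop), ProbabilityTheory.cond, lintegral_smul_measure,
    volume_Ioo_neg_pi_div_two_pi_div_two, hcov, cauchyMeasure_of_scale_ne_zero _ hγ,
    lintegral_withDensity_eq_lintegral_mul _ (measurable_cauchyPDF _ _) hg]
  have hintegrand (s : ℝ) : ENNReal.ofReal |π * cauchyPDFReal x₀ γ s| *
      g (x₀ + γ * tan (arctan ((s - x₀) / γ))) = ENNReal.ofReal π * (cauchyPDF x₀ γ * g) s := by
    rw [tan_arctan, mul_div_cancel₀ _ hγ', add_sub_cancel,
      abs_of_nonneg (mul_nonneg pi_pos.le (cauchyPDF_pos x₀ hγ s).le),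
      ENNReal.ofReal_mul pi_pos.le, Pi.mul_apply, cauchyPDF, mul_assoc]
  simp_rw [hintegrand]
  rw [lintegral_const_mul' _ _ ENNReal.ofReal_ne_top, smul_eq_mul,
    ENNReal.inv_mul_cancel_left (by simp [pi_pos]) ENNReal.ofReal_ne_top]

theorem continuous_integral_cauchyMeasure {E : Type*} [NormedAddCommGroup E] [NormedSpace ℝ E]
    {G : ℝ → E} (hG : Continuous G) {C : ℝ} (hC : ∀ s, ‖G s‖ ≤ C) :
    Continuous fun p : ℝ × ℝ≥0 => ∫ s, G s ∂cauchyMeasure p.1 p.2 := by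
  have hangle : (fun p : ℝ × ℝ≥0 => ∫ s, G s ∂cauchyMeasure p.1 p.2) =
      fun p => ∫ θ, G (p.1 + p.2 * tan θ) ∂volume[|Ioo (-(π / 2)) (π / 2)] := by
    ext p
    rw [cauchyMeasure_eq_map_tan, integral_map (by fun_prop) hG.aestronglyMeasurable]
  rw [hangle]
  refine continuous_of_dominated (bound := fun _ => C)
    (fun p => hG.comp_aestronglyMeasurable (by fun_prop : Measurable _).aestronglyMeasurable)
    (fun p => ae_of_all _ fun θ => hC _) (integrable_const C) (ae_of_all _ fun θ => by fun_prop)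

theorem lintegral_Ioi_eq_lintegral_Ioi_comp_sq (k : ℝ → ℝ≥0∞) :
    ∫⁻ s in Ioi 0, k s = ∫⁻ t in Ioi 0, ENNReal.ofReal (2 * t) * k (t ^ 2) := by
  have himage : (fun t : ℝ => t ^ 2) '' Ioi 0 = Ioi 0 := by
    ext s
    constructor
    · rintro ⟨t, ht, rfl⟩
      exact pow_pos ht.out 2
    · exact fun hs => ⟨√s, sqrt_pos.2 hs, sq_sqrt hs.le⟩
  have hcov := lintegral_image_eq_lintegral_abs_deriv_mul measurableSet_Ioi
    (fun t _ => (hasDerivAt_pow 2 t).hasDerivWithinAt)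
    ((pow_left_strictMonoOn₀ two_ne_zero).injOn.mono fun t ht => le_of_lt ht) k
  rw [himage] at hcov
  refine hcov.trans (setLIntegral_congr_fun measurableSet_Ioi fun t (ht : 0 < t) => ?_)
  simp [abs_of_pos (mul_pos two_pos ht)]

theorem lintegral_Iio_eq_lintegral_Ioi_comp_neg_sq (k : ℝ → ℝ≥0∞) :
    ∫⁻ s in Iio 0, k s = ∫⁻ t in Ioi 0, ENNReal.ofReal (2 * t) * k (-t ^ 2) := by
  have himage : (fun t : ℝ => -t ^ 2) '' Ioi 0 = Iio 0 := by
    ext s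
    constructor
    · rintro ⟨t, ht, rfl⟩
      exact neg_neg_of_pos (pow_pos ht.out 2)
    · exact fun hs => ⟨√(-s), sqrt_pos.2 (neg_pos.2 hs), by simp [sq_sqrt (neg_pos.2 hs).le]⟩
  have hcov := lintegral_image_eq_lintegral_abs_deriv_mul (f := fun t => -t ^ 2)
    measurableSet_Ioi (fun t _ => (hasDerivAt_pow 2 t).neg.hasDerivWithinAt)
    (fun a ha b hb h => (pow_left_strictMonoOn₀ two_ne_zero).injOn (le_of_lt ha) (le_of_lt hb)
      (neg_inj.1 h)) k
  rw [himage] at hcov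
  refine hcov.trans (setLIntegral_congr_fun measurableSet_Ioi fun t (ht : 0 < t) => ?_)
  simp [abs_of_pos (mul_pos two_pos ht)]

noncomputable def boundaryPoint (s : ℝ) : ℝ × ℝ := (√s, √(-s))

theorem boundaryPoint_mem_Eset (s : ℝ) : boundaryPoint s ∈ Eset := by
  refine ⟨⟨sqrt_nonneg _, sqrt_nonneg _⟩, ?_⟩
  rcases le_total s 0 with h | h
  · exact .inl (sqrt_eq_zero_of_nonpos h)
  · exact .inr (sqrt_eq_zero_of_nonpos (neg_nonpos.2 h))

@[fun_prop]
theorem continuous_boundaryPoint : Continuous boundaryPoint := by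
  unfold boundaryPoint; fun_prop

theorem boundaryPoint_sq {t : ℝ} (ht : 0 ≤ t) : boundaryPoint (t ^ 2) = (t, 0) := by
  simp [boundaryPoint, sqrt_sq ht, sqrt_eq_zero_of_nonpos (neg_nonpos.2 (sq_nonneg t))]

theorem boundaryPoint_neg_sq {t : ℝ} (ht : 0 ≤ t) : boundaryPoint (-t ^ 2) = (0, t) := by
  simp [boundaryPoint, sqrt_sq ht, sqrt_eq_zero_of_nonpos (neg_nonpos.2 (sq_nonneg t))]

theorem boundaryPoint_sq_sub_sq {p : ℝ × ℝ} (hp : p ∈ Eset) :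
    boundaryPoint (p.1 ^ 2 - p.2 ^ 2) = p := by
  obtain ⟨x, y⟩ := p
  obtain ⟨⟨hx, hy⟩, rfl | rfl⟩ := hp
  · simpa using boundaryPoint_neg_sq hy
  · simpa using boundaryPoint_sq hx

theorem sq_sub_sq_boundaryPoint (s : ℝ) :
    (boundaryPoint s).1 ^ 2 - (boundaryPoint s).2 ^ 2 = s := by
  rcases le_total s 0 with h | h
  · simp [boundaryPoint, sqrt_eq_zero_of_nonpos h, sq_sqrt (neg_nonneg.2 h)]
  · simp [boundaryPoint, sqrt_eq_zero_of_nonpos (neg_nonpos.2 h), sq_sqrt h]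

theorem isClosedEmbedding_boundaryPoint : Topology.IsClosedEmbedding boundaryPoint :=
  Function.LeftInverse.isClosedEmbedding (f := fun p : ℝ × ℝ => p.1 ^ 2 - p.2 ^ 2)
    sq_sub_sq_boundaryPoint (by fun_prop) continuous_boundaryPoint

@[fun_prop]
theorem measurable_Qdens (u v : ℝ) : Measurable (Qdens u v) := by
  unfold Qdens; fun_prop

theorem two_mul_cauchyPDFReal_sq {u v : ℝ} (hu : 0 < u) (hv : 0 < v) (t : ℝ) :
    2 * t * cauchyPDFReal (u ^ 2 - v ^ 2) (2 * u * v).toNNReal (t ^ 2) = Qdens u v t := by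
  rw [cauchyPDFReal_def, Real.coe_toNNReal _ (by positivity), Qdens]
  field_simp
  ring

theorem two_mul_cauchyPDFReal_neg_sq {u v : ℝ} (hu : 0 < u) (hv : 0 < v) (t : ℝ) :
    2 * t * cauchyPDFReal (u ^ 2 - v ^ 2) (2 * u * v).toNNReal (-t ^ 2) = Qdens v u t := by
  rw [cauchyPDFReal_def, Real.coe_toNNReal _ (by positivity), Qdens]
  field_simp
  ring

theorem Qmeas_eq_map_cauchyMeasure_of_pos {u v : ℝ} (hu : 0 < u) (hv : 0 < v) :
    Qmeas (u, v) = (cauchyMeasure (u ^ 2 - v ^ 2) (2 * u * v).toNNReal).map boundaryPoint := by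
  refine Measure.ext_of_lintegral _ fun g hg => ?_
  have hγ : (2 * u * v).toNNReal ≠ 0 := (Real.toNNReal_pos.2 (by positivity)).ne'
  rw [Qmeas, if_pos ⟨hu, hv⟩, lintegral_add_measure, lintegral_map hg (by fun_prop),
    lintegral_map hg (by fun_prop),
    lintegral_withDensity_eq_lintegral_mul _ (by fun_prop) (by fun_prop),
    lintegral_withDensity_eq_lintegral_mul _ (by fun_prop) (by fun_prop),
    lintegral_map hg (by fun_prop), cauchyMeasure_of_scale_ne_zero _ hγ,
    lintegral_withDensity_eq_lintegral_mul _ (measurable_cauchyPDF _ _) (by fun_prop)]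
  conv_rhs => rw [← lintegral_add_compl _ measurableSet_Ioi, compl_Ioi,
    ← restrict_Iio_eq_restrict_Iic, lintegral_Ioi_eq_lintegral_Ioi_comp_sq,
    lintegral_Iio_eq_lintegral_Ioi_comp_neg_sq]
  congr 1 <;> refine setLIntegral_congr_fun measurableSet_Ioi fun t (ht : 0 < t) => ?_
  · simp only [Pi.mul_apply]
    rw [boundaryPoint_sq ht.le, cauchyPDF, ← mul_assoc,
      ← ENNReal.ofReal_mul (by positivity), two_mul_cauchyPDFReal_sq hu hv]
  · simp only [Pi.mul_apply]
    rw [boundaryPoint_neg_sq ht.le, cauchyPDF, ← mul_assoc,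
      ← ENNReal.ofReal_mul (by positivity), two_mul_cauchyPDFReal_neg_sq hu hv]

theorem Qmeas_eq_map_cauchyMeasure {x : ℝ × ℝ} (hx : 0 ≤ x.1 ∧ 0 ≤ x.2) :
    Qmeas x = (cauchyMeasure (x.1 ^ 2 - x.2 ^ 2) (2 * x.1 * x.2).toNNReal).map boundaryPoint := by
  obtain ⟨u, v⟩ := x
  by_cases h : 0 < u ∧ 0 < v
  · exact Qmeas_eq_map_cauchyMeasure_of_pos h.1 h.2
  have hE : (u, v) ∈ Eset := by
    refine ⟨hx, ?_⟩
    contrapose! h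
    exact ⟨hx.1.lt_of_ne' h.1, hx.2.lt_of_ne' h.2⟩
  have hγ : (2 * u * v).toNNReal = 0 := by
    rcases hE.2 with (h0 : u = 0) | (h0 : v = 0) <;> simp [h0]
  rw [Qmeas, if_neg h, hγ, cauchyMeasure_zero_scale, Measure.map_dirac' (by fun_prop),
    boundaryPoint_sq_sub_sq hE]

theorem harmonic_measure_continuous (f : ℝ × ℝ → ℝ)
    (hf : ContinuousOn f Eset) (hb : ∃ C, ∀ z ∈ Eset, |f z| ≤ C) :
    ContinuousOn (fun x => ∫ z, f z ∂(Qmeas x)) {x : ℝ × ℝ | 0 ≤ x.1 ∧ 0 ≤ x.2} := by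
  obtain ⟨C, hC⟩ := hb
  have hcont : Continuous fun x : ℝ × ℝ =>
      ∫ s, f (boundaryPoint s) ∂cauchyMeasure (x.1 ^ 2 - x.2 ^ 2) (2 * x.1 * x.2).toNNReal :=
    (continuous_integral_cauchyMeasure
      (hf.comp_continuous continuous_boundaryPoint boundaryPoint_mem_Eset)
      fun s => hC _ (boundaryPoint_mem_Eset s)).comp
      (by fun_prop : Continuous fun x : ℝ × ℝ => (x.1 ^ 2 - x.2 ^ 2, (2 * x.1 * x.2).toNNReal))
  refine hcont.continuousOn.congr fun x hx => ?_
  rw [Qmeas_eq_map_cauchyMeasure hx, isClosedEmbedding_boundaryPoint.integral_map]
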